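/- arXiv:0809.3683 — 5 statements merged into one kernel-verified Lean document; each statement's English description precedes it below -/
import Mathlib

section
/- The number of parking functions of length n is (n+1)^(n-1). -/
open Finset

namespace PFaux

variable {n : ℕ}

/-- Number of integers in `[0, m)` congruent to `(g i).val` mod `n+1`, summed over `i`. -/
def Q (g : Fin n → ZMod (n+1)) (m : ℕ) : ℕ := ∑ i, (m + n - (g i).val) / (n+1)

/-- `g` corresponds to a parking function (Pollak's circular encoding). -/
def Good (g : Fin n → ZMod (n+1)) : Prop := ∀ m, 1 ≤ m → m ≤ n → m ≤ Q g m

def IsPF (f : Fin n → Fin n) : Prop :=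
  ∀ k : Fin n, (k : ℕ) + 1 ≤ (Finset.univ.filter fun i => f i ≤ k).card

lemma val_le (x : ZMod (n+1)) : x.val ≤ n := Nat.lt_succ_iff.mp (ZMod.val_lt x)

lemma Q_period (g : Fin n → ZMod (n+1)) (m : ℕ) : Q g (m + (n+1)) = Q g m + n := by
  unfold Q
  have h : ∀ i : Fin n, (m + (n+1) + n - (g i).val) / (n+1)
      = (m + n - (g i).val) / (n+1) + 1 := by
    intro i
    have hv := val_le (g i)
    rw [show m + (n+1) + n - (g i).val = (m + n - (g i).val) + (n+1) by omega,
      Nat.add_div_right _ (Nat.succ_pos n)]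
  rw [Finset.sum_congr rfl (fun i _ => h i), Finset.sum_add_distrib]
  simp

lemma Q_eq_card (g : Fin n → ZMod (n+1)) (m : ℕ) (hm : m ≤ n + 1) :
    Q g m = (univ.filter fun i => (g i).val < m).card := by
  unfold Q
  rw [Finset.card_filter]
  refine Finset.sum_congr rfl fun i _ => ?_
  have hv := val_le (g i)
  by_cases h : (g i).val < m
  · rw [if_pos h, show m + n - (g i).val = (m - 1 - (g i).val) + (n+1) by omega,
      Nat.add_div_right _ (Nat.succ_pos n), Nat.div_eq_of_lt (by omega)]
  · rw [if_neg h, Nat.div_eq_of_lt (by omega)]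

lemma val_sub_nat (x : ZMod (n+1)) (s : ℕ) (hs : s ≤ n) :
    (x - (s : ZMod (n+1))).val
      = if s ≤ x.val then x.val - s else x.val + (n+1) - s := by
  have hsv : ((s : ZMod (n+1))).val = s := ZMod.val_cast_of_lt (by omega)
  have hkey : ((x - (s : ZMod (n+1))).val + s) % (n+1) = x.val := by
    conv_rhs => rw [show x = (x - (s : ZMod (n+1))) + (s : ZMod (n+1)) by ring]
    rw [ZMod.val_add, hsv]
  have hw := val_le (x - (s : ZMod (n+1)))
  set w := (x - (s : ZMod (n+1))).val with hwdef
  have hx := val_le x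
  by_cases h : w + s < n + 1
  · rw [Nat.mod_eq_of_lt h] at hkey
    split <;> omega
  · have h2 : w + s - (n+1) < n+1 := by omega
    rw [Nat.mod_eq_sub_mod (by omega), Nat.mod_eq_of_lt h2] at hkey
    split <;> omega

lemma Q_shift (g : Fin n → ZMod (n+1)) (s : ℕ) (hs : s ≤ n) (m : ℕ) :
    Q (fun i => g i - (s : ZMod (n+1))) m + Q g s = Q g (m + s) := by
  unfold Q
  rw [← Finset.sum_add_distrib]
  refine Finset.sum_congr rfl fun i _ => ?_
  have hv := val_le (g i)
  rw [val_sub_nat (g i) s hs]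
  set v := (g i).val with hvdef
  by_cases h : s ≤ v
  · rw [if_pos h, Nat.div_eq_of_lt (show s + n - v < n + 1 by omega)]
    rw [show m + n - (v - s) = m + s + n - v by omega]
    omega
  · rw [if_neg h,
      show s + n - v = (s - v - 1) + (n+1) by omega,
      Nat.add_div_right _ (Nat.succ_pos n),
      Nat.div_eq_of_lt (show s - v - 1 < n + 1 by omega),
      show m + s + n - v = (m + n - (v + (n+1) - s)) + (n+1) by omega,
      Nat.add_div_right _ (Nat.succ_pos n)]

/-- `D g m = m - Q g m` as an integer. -/
noncomputable def D (g : Fin n → ZMod (n+1)) (m : ℕ) : ℤ := (m : ℤ) - Q g m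

lemma D_period (g : Fin n → ZMod (n+1)) (m : ℕ) : D g (m + (n+1)) = D g m + 1 := by
  unfold D; rw [Q_period]; push_cast; ring

lemma good_sub_iff (g : Fin n → ZMod (n+1)) (s : ℕ) (hs : s ≤ n) :
    Good (fun i => g i - (s : ZMod (n+1))) ↔ ∀ m, 1 ≤ m → m ≤ n → D g (m + s) ≤ D g s := by
  unfold Good D
  constructor
  · intro H m h1 h2
    have := H m h1 h2
    have h3 := Q_shift g s hs m
    push_cast
    omega
  · intro H m h1 h2
    have := H m h1 h2
    have h3 := Q_shift g s hs m
    push_cast at this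
    omega

lemma exists_unique_good_shift (g : Fin n → ZMod (n+1)) :
    ∃! s : ℕ, s ≤ n ∧ Good (fun i => g i - (s : ZMod (n+1))) := by
  classical
  obtain ⟨M, hM⟩ : ∃ M, M ∈ (Finset.range (n+1)).image (D g) ∧
      ∀ x ∈ (Finset.range (n+1)).image (D g), x ≤ M := by
    obtain ⟨M, h1, h2⟩ := Finset.exists_max_image (Finset.range (n+1)) (D g)
      ⟨0, by simp⟩
    exact ⟨D g M, Finset.mem_image_of_mem _ h1, by
      intro x hx; rw [Finset.mem_image] at hx; obtain ⟨a, ha, rfl⟩ := hx; exact h2 a ha⟩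
  obtain ⟨hMmem, hMmax⟩ := hM
  have hex : ∃ s, s ≤ n ∧ D g s = M := by
    obtain ⟨s, hs, hDs⟩ := Finset.mem_image.mp hMmem
    exact ⟨s, by simp at hs; omega, hDs⟩
  obtain ⟨s₀, hs₀le, hs₀M, hs₀min⟩ :
      ∃ s₀, s₀ ≤ n ∧ D g s₀ = M ∧ ∀ j < s₀, D g j < M := by
    refine ⟨Nat.find hex, (Nat.find_spec hex).1, (Nat.find_spec hex).2, fun j hj => ?_⟩
    have := Nat.find_min hex hj
    have hj' : j ≤ n := le_trans (le_of_lt hj) (Nat.find_spec hex).1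
    have hle : D g j ≤ M := hMmax _ (Finset.mem_image_of_mem _ (by simp; omega))
    rcases lt_or_eq_of_le hle with h | h
    · exact h
    · exact absurd ⟨hj', h⟩ this
  have hmaxall : ∀ j ≤ n, D g j ≤ M := fun j hj =>
    hMmax _ (Finset.mem_image_of_mem _ (by simp; omega))
  refine ⟨s₀, ⟨hs₀le, (good_sub_iff g s₀ hs₀le).mpr fun m h1 h2 => ?_⟩, ?_⟩
  · by_cases h : m + s₀ ≤ n
    · rw [hs₀M]; exact hmaxall _ h
    · have hj : m + s₀ = (m + s₀ - (n+1)) + (n+1) := by omega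
      rw [hj, D_period]
      have : D g (m + s₀ - (n+1)) < M := hs₀min _ (by omega)
      omega
  · rintro s ⟨hsle, hgood⟩
    rw [good_sub_iff g s hsle] at hgood
    by_contra hne
    have hgood₀ := (good_sub_iff g s₀ hs₀le).mpr ?_
    rotate_left
    · intro m h1 h2
      by_cases h : m + s₀ ≤ n
      · rw [hs₀M]; exact hmaxall _ h
      · have hj : m + s₀ = (m + s₀ - (n+1)) + (n+1) := by omega
        rw [hj, D_period]
        have : D g (m + s₀ - (n+1)) < M := hs₀min _ (by omega)
        omega
    rw [good_sub_iff g s₀ hs₀le] at hgood₀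
    rcases Nat.lt_or_ge s s₀ with h | h
    · have h1 := hgood (s₀ - s) (by omega) (by omega)
      have h2 := hgood₀ (s + (n+1) - s₀) (by omega) (by omega)
      rw [show s₀ - s + s = s₀ by omega] at h1
      rw [show s + (n+1) - s₀ + s₀ = s + (n+1) by omega, D_period] at h2
      omega
    · have hlt : s₀ < s := by omega
      have h1 := hgood₀ (s - s₀) (by omega) (by omega)
      have h2 := hgood (s₀ + (n+1) - s) (by omega) (by omega)
      rw [show s - s₀ + s₀ = s by omega] at h1
      rw [show s₀ + (n+1) - s + s = s₀ + (n+1) by omega, D_period] at h2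
      omega

lemma exists_unique_shift (g : Fin n → ZMod (n+1)) :
    ∃! t : ZMod (n+1), Good (fun i => g i + t) := by
  obtain ⟨s₀, ⟨hs₀le, hs₀good⟩, huniq⟩ := exists_unique_good_shift g
  refine ⟨-(s₀ : ZMod (n+1)), by simpa [sub_eq_add_neg] using hs₀good, ?_⟩
  intro t ht
  have hsle : (-t).val ≤ n := Nat.lt_succ_iff.mp (ZMod.val_lt _)
  have hcast : (((-t).val : ℕ) : ZMod (n+1)) = -t := by
    simp [ZMod.natCast_val, ZMod.cast_id]
  have : (-t).val = s₀ := by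
    refine huniq _ ⟨hsle, ?_⟩
    convert ht using 2 with i
    rw [hcast]; ring
  rw [← this, hcast]; ring

noncomputable def mulEquiv :
    ({g : Fin n → ZMod (n+1) // Good g} × ZMod (n+1)) ≃ (Fin n → ZMod (n+1)) := by
  apply Equiv.ofBijective (fun p => fun i => p.1.1 i + p.2)
  constructor
  · rintro ⟨⟨g, hg⟩, t⟩ ⟨⟨g', hg'⟩, t'⟩ heq
    simp only [Prod.mk.injEq, Subtype.mk.injEq]
    set h : Fin n → ZMod (n+1) := fun i => g i + t with hh
    have hfun : ∀ i, g' i + t' = h i := fun i => congrFun heq.symm i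
    obtain ⟨u, _, huniq⟩ := exists_unique_shift h
    have h1 : Good (fun i => h i + (-t)) := by
      convert hg using 2 with i; rw [hh]; ring
    have h2 : Good (fun i => h i + (-t')) := by
      convert hg' using 2 with i; rw [← hfun i]; ring
    have : -t = -t' := (huniq _ h1).trans (huniq _ h2).symm
    have htt : t = t' := by simpa using congrArg Neg.neg this
    refine ⟨?_, htt⟩
    funext i
    have h3 := hfun i
    rw [← htt] at h3
    exact (add_right_cancel h3).symm
  · intro h
    obtain ⟨t, ht, -⟩ := exists_unique_shift h
    refine ⟨⟨⟨fun i => h i + t, ht⟩, -t⟩, ?_⟩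
    funext i; simp

lemma card_good : Nat.card {g : Fin n → ZMod (n+1) // Good g} * (n+1) = (n+1)^n := by
  have := Nat.card_congr (mulEquiv (n := n))
  rw [Nat.card_prod] at this
  rw [Nat.card_eq_fintype_card (α := ZMod (n+1))] at this
  rw [ZMod.card] at this
  rw [Nat.card_eq_fintype_card (α := Fin n → ZMod (n+1))] at this
  rwa [Fintype.card_fun, ZMod.card, Fintype.card_fin] at this

lemma good_val_lt {g : Fin n → ZMod (n+1)} (hg : Good g) (i : Fin n) : (g i).val < n := by
  have hn : 0 < n := i.pos
  have h := hg n hn le_rfl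
  rw [Q_eq_card g n (by omega)] at h
  have hcard : (univ.filter fun j => (g j).val < n).card ≤ n := by
    calc (univ.filter fun j => (g j).val < n).card ≤ (univ : Finset (Fin n)).card :=
        Finset.card_filter_le _ _
      _ = n := by simp
  have huniv : (univ.filter fun j => (g j).val < n) = univ :=
    Finset.eq_univ_of_card _ (by simp only [Fintype.card_fin]; omega)
  have hmem : i ∈ univ.filter fun j => (g j).val < n := by rw [huniv]; exact Finset.mem_univ i
  exact (Finset.mem_filter.mp hmem).2

lemma pf_to_good {f : Fin n → Fin n} (hf : IsPF f) :
    Good (fun i => ((f i : ℕ) : ZMod (n+1))) := by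
  intro m h1 h2
  rw [Q_eq_card _ m (by omega)]
  have hval : ∀ i, (((f i : ℕ) : ZMod (n+1))).val = (f i : ℕ) := fun i =>
    ZMod.val_cast_of_lt (by have := (f i).isLt; omega)
  have hk := hf ⟨m - 1, by omega⟩
  calc m = (m - 1) + 1 := by omega
    _ ≤ _ := hk
    _ = _ := by
        apply Finset.card_le_card ?_ |>.antisymm (Finset.card_le_card ?_) <;>
        · intro i hi
          simp only [Finset.mem_filter, Finset.mem_univ, true_and] at *
          first
            | (rw [hval]; rw [Fin.le_def] at hi; simp at hi ⊢; omega)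
            | (rw [hval] at hi; rw [Fin.le_def]; simp at hi ⊢; omega)

lemma good_to_pf {g : Fin n → ZMod (n+1)} (hg : Good g) :
    IsPF (fun i => (⟨(g i).val, good_val_lt hg i⟩ : Fin n)) := by
  intro k
  have h := hg ((k : ℕ) + 1) (by omega) k.isLt
  rw [Q_eq_card _ _ (by have := k.isLt; omega)] at h
  calc (k:ℕ) + 1 ≤ _ := h
    _ ≤ _ := Finset.card_le_card ?_
  intro i hi
  simp only [Finset.mem_filter, Finset.mem_univ, true_and] at *
  rw [Fin.le_def]
  simp only at hi ⊢
  omega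

noncomputable def pfEquiv :
    {f : Fin n → Fin n // IsPF f} ≃ {g : Fin n → ZMod (n+1) // Good g} where
  toFun f := ⟨fun i => ((f.1 i : ℕ) : ZMod (n+1)), pf_to_good f.2⟩
  invFun g := ⟨fun i => ⟨(g.1 i).val, good_val_lt g.2 i⟩, good_to_pf g.2⟩
  left_inv f := by
    ext i
    simp [ZMod.val_cast_of_lt (show ((f.1 i : ℕ)) < n + 1 by have := (f.1 i).isLt; omega)]
  right_inv g := by
    ext i
    simp [ZMod.natCast_val, ZMod.cast_id]

end PFaux

/-- A parking function of length `n` is a function `f : {1,…,n} → {1,…,n}` (here modelled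
on `Fin n`, 0-indexed) such that for each `k = 1,…,n`, the number of `i` with `f i ≤ k`
is at least `k`.  The number of parking functions of length `n` is `(n+1)^(n-1)`. -/
theorem numberOfParkingFunctions (n : ℕ) :
    Nat.card {f : Fin n → Fin n //
      ∀ k : Fin n, (k : ℕ) + 1 ≤ (Finset.univ.filter fun i => f i ≤ k).card} =
    (n + 1) ^ (n - 1) := by
  have hcard : Nat.card {f : Fin n → Fin n // PFaux.IsPF f} * (n+1) = (n+1)^n := by
    rw [Nat.card_congr (PFaux.pfEquiv (n := n))]; exact PFaux.card_good
  have hfinal : Nat.card {f : Fin n → Fin n // PFaux.IsPF f} = (n+1)^(n-1) := by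
    rcases n with _ | m
    · simpa using hcard
    · apply Nat.eq_of_mul_eq_mul_right (show 0 < m + 1 + 1 by omega)
      rw [hcard, ← pow_succ]
      congr 1
  exact hfinal
end

section
/- There is a bijection between the set of parking functions of length n and the set of pairs (σ, b), where σ is a permutation of {1,...,n} and b = (b_1,...,b_n) is a sequence of nonnegative integers satisfying: (i) b_1 ≤ b_2 ≤ ... ≤ b_{n-1} ≤ b_n = n; (ii) b_k ≥ k for k = 1,...,n-1; (iii) if b_{s+1} = b_s then σ(s) < σ(s+1). -/
/-!
Encode a parking function `f` by the complemented values `n - f i ∈ {1, …, n}`. Their stable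
sorting permutation `σ` and the sorted values `b = (n - f) ∘ σ` determine `f`, and the pairs
`(σ, b)` arising from stable sorts are exactly those for which `s ↦ (b s, σ s)` is strictly
increasing lexicographically, which is conditions (i) and (iii). Since `f ∘ σ` is decreasing,
`#{i | f i ≤ k}` counts a final segment of `Fin n`, so the parking condition becomes
`f (σ j) ≤ n - 1 - j`, i.e. condition (ii); it forces `b` to end at `n`.
-/

open Finset

section

variable {n : ℕ} {α β : Type*}

theorem Fin.strictMono_of_lt_add_one [Preorder α] {f : Fin n → α}
    (h : ∀ i : Fin n, ∀ hi : (i : ℕ) + 1 < n, f i < f ⟨i + 1, hi⟩) : StrictMono f := by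
  rintro ⟨i, hi⟩ ⟨j, hj⟩ (hij : i + 1 ≤ j)
  induction j, hij using Nat.le_induction with
  | base => exact h ⟨i, hi⟩ hj
  | succ j _ ih => exact (ih (by omega)).trans (h ⟨j, by omega⟩ hj)

theorem Fin.strictMono_toLex_iff [LinearOrder α] [Preorder β] {a : Fin n → α} {b : Fin n → β} :
    StrictMono (fun i => toLex (a i, b i)) ↔
      (∀ i : Fin n, ∀ hi : (i : ℕ) + 1 < n, a i ≤ a ⟨i + 1, hi⟩) ∧
      (∀ i : Fin n, ∀ hi : (i : ℕ) + 1 < n, a ⟨i + 1, hi⟩ = a i → b i < b ⟨i + 1, hi⟩) := by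
  constructor
  · intro h
    have step (i : Fin n) (hi : (i : ℕ) + 1 < n) := Prod.Lex.toLex_lt_toLex.mp
      (h (show i < ⟨i + 1, hi⟩ from Fin.mk_lt_mk.mpr i.val.lt_succ_self))
    refine ⟨fun i hi => ?_, fun i hi heq => ?_⟩
    · rcases step i hi with hlt | ⟨heq, -⟩
      exacts [hlt.le, heq.le]
    · rcases step i hi with hlt | ⟨-, hlt⟩
      exacts [absurd heq hlt.ne', hlt]
  · rintro ⟨hmono, hties⟩
    refine Fin.strictMono_of_lt_add_one fun i hi => Prod.Lex.toLex_lt_toLex.mpr ?_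
    rcases (hmono i hi).lt_or_eq with hlt | heq
    exacts [Or.inl hlt, Or.inr ⟨heq, hties i hi heq.symm⟩]

theorem Tuple.eq_sort_iff_strictMono_toLex [LinearOrder α] {f : Fin n → α}
    {σ : Equiv.Perm (Fin n)} :
    σ = Tuple.sort f ↔ StrictMono fun i => toLex (f (σ i), σ i) :=
  Tuple.eq_sort_iff'

theorem Equiv.Perm.card_filter_comp [Fintype α] (τ : Equiv.Perm α) (p : α → Prop)
    [DecidablePred p] : #{i | p (τ i)} = #{i | p i} :=
  card_equiv τ (by simp)

end

namespace ParkingFunction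

variable {n : ℕ}

def IsParking (f : Fin n → Fin n) : Prop :=
  ∀ k : Fin n, (k : ℕ) + 1 ≤ #{i | f i ≤ k}

theorem isParking_iff_of_antitone {f : Fin n → Fin n} {τ : Equiv.Perm (Fin n)}
    (h : Antitone (f ∘ τ)) : IsParking f ↔ ∀ j, f (τ j) ≤ j.rev := by
  have hsorted : Monotone (f ∘ τ ∘ Fin.rev) := h.comp Fin.rev_anti
  have hcount (k : Fin n) : #{i | f i ≤ k} = #{i | (f ∘ τ ∘ Fin.rev) i ≤ k} :=
    ((τ * Fin.revPerm).card_filter_comp (f · ≤ k)).symm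
  simp_rw [IsParking, Nat.add_one_le_iff, hcount,
    Tuple.lt_card_le_iff_apply_le_of_monotone hsorted, Function.comp_apply]
  rw [Fin.rev_surjective.forall]
  simp only [Fin.rev_rev]

def sortPerm (f : Fin n → Fin n) : Equiv.Perm (Fin n) :=
  Tuple.sort fun i => n - (f i : ℕ)

def sortedComplement (f : Fin n → Fin n) : Fin n → ℕ :=
  fun s => n - (f (sortPerm f s) : ℕ)

theorem strictMono_toLex_sortedComplement (f : Fin n → Fin n) :
    StrictMono fun s => toLex (sortedComplement f s, sortPerm f s) :=
  (Tuple.eq_sort_iff_strictMono_toLex (f := fun i => n - (f i : ℕ))).mp rfl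

theorem antitone_comp_sortPerm (f : Fin n → Fin n) : Antitone (f ∘ sortPerm f) := by
  intro s t hst
  have hle : n - (f (sortPerm f s) : ℕ) ≤ n - f (sortPerm f t) :=
    Tuple.monotone_sort (fun i => n - (f i : ℕ)) hst
  have := (f (sortPerm f s)).isLt
  exact show f (sortPerm f t) ≤ f (sortPerm f s) from Fin.le_def.mpr (by omega)

theorem add_one_le_sortedComplement {f : Fin n → Fin n} (hf : IsParking f) (k : Fin n) :
    (k : ℕ) + 1 ≤ sortedComplement f k := by
  have := (isParking_iff_of_antitone (antitone_comp_sortPerm f)).mp hf k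
  rw [Fin.le_def, Fin.val_rev] at this
  unfold sortedComplement
  omega

def ofSortedPair (σ : Equiv.Perm (Fin n)) (b : Fin n → ℕ)
    (hb : ∀ k : Fin n, (k : ℕ) + 1 ≤ b k) : Fin n → Fin n :=
  fun i => ⟨n - b (σ⁻¹ i), by have := hb (σ⁻¹ i); omega⟩

theorem ofSortedPair_sortedComplement (f : Fin n → Fin n)
    (h : ∀ k : Fin n, (k : ℕ) + 1 ≤ sortedComplement f k) :
    ofSortedPair (sortPerm f) (sortedComplement f) h = f := by
  ext i
  have := (f i).isLt
  simp only [ofSortedPair, sortedComplement, Equiv.Perm.coe_inv, Equiv.apply_symm_apply]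
  omega

section ofSortedPair

variable {σ : Equiv.Perm (Fin n)} {b : Fin n → ℕ} (hb : ∀ k : Fin n, (k : ℕ) + 1 ≤ b k)

theorem ofSortedPair_apply_perm (s : Fin n) : (ofSortedPair σ b hb (σ s) : ℕ) = n - b s := by
  simp [ofSortedPair]

theorem isParking_ofSortedPair (hmono : Monotone b) : IsParking (ofSortedPair σ b hb) := by
  refine (isParking_iff_of_antitone (τ := σ) fun s t hst => ?_).mpr fun j => ?_
  · simp only [Function.comp_apply, Fin.le_def, ofSortedPair_apply_perm]
    exact Nat.sub_le_sub_left (hmono hst) n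
  · have := hb j
    rw [Fin.le_def, Fin.val_rev, ofSortedPair_apply_perm]
    omega

theorem sortPerm_ofSortedPair (hbn : ∀ k, b k ≤ n)
    (hlex : StrictMono fun i => toLex (b i, σ i)) : sortPerm (ofSortedPair σ b hb) = σ := by
  refine (Tuple.eq_sort_iff_strictMono_toLex.mpr ?_).symm
  simpa only [ofSortedPair_apply_perm, Nat.sub_sub_self (hbn _)] using hlex

theorem sortedComplement_ofSortedPair (hbn : ∀ k, b k ≤ n)
    (hlex : StrictMono fun i => toLex (b i, σ i)) :
    sortedComplement (ofSortedPair σ b hb) = b := by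
  ext s
  rw [sortedComplement, sortPerm_ofSortedPair hb hbn hlex, ofSortedPair_apply_perm,
    Nat.sub_sub_self (hbn s)]

end ofSortedPair

end ParkingFunction

open ParkingFunction in
/-- There is a bijection between the set of parking functions of length `n`
(functions `f : Fin n → Fin n`, 0-indexed, with `#{i | f i ≤ k} ≥ k+1` for all `k`)
and the set of pairs `(σ, b)` where `σ` is a permutation of `{1,…,n}` and
`b = (b_1,…,b_n)` is a sequence of nonnegative integers (here `b : Fin n → ℕ`,
0-indexed, so `b_k` is `b ⟨k-1⟩`) satisfying:
(i) `b_1 ≤ b_2 ≤ … ≤ b_{n-1} ≤ b_n = n`;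
(ii) `b_k ≥ k` for `k = 1,…,n-1`;
(iii) if `b_{s+1} = b_s` then `σ(s) < σ(s+1)`. -/
theorem parkingFunctions_equiv_perm_bData (n : ℕ) (hn : 0 < n) :
    Nonempty (
      {f : Fin n → Fin n //
        ∀ k : Fin n, (k : ℕ) + 1 ≤ (Finset.univ.filter fun i => f i ≤ k).card} ≃
      {p : Equiv.Perm (Fin n) × (Fin n → ℕ) //
        (∀ s : Fin n, ∀ h : (s : ℕ) + 1 < n, p.2 s ≤ p.2 ⟨(s : ℕ) + 1, h⟩) ∧
        p.2 ⟨n - 1, Nat.sub_lt hn one_pos⟩ = n ∧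
        (∀ k : Fin n, (k : ℕ) + 1 ≤ p.2 k) ∧
        (∀ s : Fin n, ∀ h : (s : ℕ) + 1 < n,
          p.2 ⟨(s : ℕ) + 1, h⟩ = p.2 s → p.1 s < p.1 ⟨(s : ℕ) + 1, h⟩)}) := by
  refine ⟨{ toFun := fun f => ⟨(sortPerm f.1, sortedComplement f.1), ?_⟩
            invFun := fun p => ⟨ofSortedPair p.1.1 p.1.2 p.2.2.2.1, ?_⟩
            left_inv := fun f => Subtype.ext <|
              ofSortedPair_sortedComplement f.1 (add_one_le_sortedComplement f.2)
            right_inv := ?_ }⟩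
  · obtain ⟨hmono, hties⟩ :=
      Fin.strictMono_toLex_iff.mp (strictMono_toLex_sortedComplement f.1)
    have hii := add_one_le_sortedComplement f.2
    exact ⟨hmono, le_antisymm (Nat.sub_le _ _)
      (Nat.le_of_pred_lt (hii ⟨n - 1, Nat.sub_lt hn one_pos⟩)), hii, hties⟩
  · have hlex := Fin.strictMono_toLex_iff.mpr ⟨p.2.1, p.2.2.2.2⟩
    exact isParking_ofSortedPair _ (Prod.Lex.monotone_fst_ofLex.comp hlex.monotone)
  · rintro ⟨⟨σ, b⟩, hmono, hlast, hii, hties⟩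
    have hlex := Fin.strictMono_toLex_iff.mpr ⟨hmono, hties⟩
    have hbn (k : Fin n) : b k ≤ n := hlast ▸
      Prod.Lex.monotone_fst_ofLex.comp hlex.monotone (Fin.le_def.mpr (Nat.le_sub_one_of_lt k.isLt))
    exact Subtype.ext (Prod.ext (sortPerm_ofSortedPair hii hbn hlex)
      (sortedComplement_ofSortedPair hii hbn hlex))
end

section
/- There is a bijection between the set of parking functions of length n and the set of pairs (σ, a), where σ is a permutation of {1,...,n} and a = (a_1,...,a_n) is a sequence of nonnegative integers satisfying: (i) a_1 = 0; (ii) a_{s+1} ≤ a_s + 1 for s = 1,...,n-1; (iii) if a_{s+1} = a_s + 1 then σ(s) < σ(s+1). -/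
open Finset

/-- Bound on `a` from the step conditions. -/
private lemma aux_a_le {n : ℕ} (hn : 0 < n) (a : Fin n → ℕ)
    (h0 : a ⟨0, hn⟩ = 0)
    (h1 : ∀ s : Fin n, ∀ h : (s : ℕ) + 1 < n, a ⟨(s : ℕ) + 1, h⟩ ≤ a s + 1) :
    ∀ s : Fin n, a s ≤ (s : ℕ) := by
  have key : ∀ m, ∀ hm : m < n, a ⟨m, hm⟩ ≤ m := by
    intro m
    induction m with
    | zero => intro hm; simpa using h0.le
    | succ k ih =>
      intro hm
      have hk : k < n := Nat.lt_of_succ_lt hm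
      have hs : a ⟨k + 1, hm⟩ ≤ a ⟨k, hk⟩ + 1 := h1 ⟨k, hk⟩ hm
      have := ih hk
      omega
  intro s
  simpa using key s.val s.isLt

/-- Monotonicity and tie conditions for `fun s => s - a s`. -/
private lemma aux_key {n : ℕ} (σ : Equiv.Perm (Fin n)) (a : Fin n → ℕ)
    (ha : ∀ s : Fin n, a s ≤ (s : ℕ))
    (h1 : ∀ s : Fin n, ∀ h : (s : ℕ) + 1 < n, a ⟨(s : ℕ) + 1, h⟩ ≤ a s + 1)
    (h2 : ∀ s : Fin n, ∀ h : (s : ℕ) + 1 < n,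
      a ⟨(s : ℕ) + 1, h⟩ = a s + 1 → σ s < σ ⟨(s : ℕ) + 1, h⟩) :
    (∀ i j : Fin n, i ≤ j → (i : ℕ) - a i ≤ (j : ℕ) - a j) ∧
    (∀ i j : Fin n, i < j → (i : ℕ) - a i = (j : ℕ) - a j → σ i < σ j) := by
  have mono : ∀ m, ∀ hm : m < n, ∀ i : Fin n, (i : ℕ) ≤ m →
      (i : ℕ) - a i ≤ m - a ⟨m, hm⟩ := by
    intro m
    induction m with
    | zero =>
      intro hm i hi
      have : i = ⟨0, hm⟩ := Fin.ext (Nat.le_zero.mp hi)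
      subst this; exact Nat.le_refl _
    | succ k ih =>
      intro hm i hi
      have hk : k < n := Nat.lt_of_succ_lt hm
      rcases Nat.lt_or_ge (i : ℕ) (k + 1) with h | h
      · have hik : (i : ℕ) ≤ k := Nat.lt_succ_iff.mp h
        have step : (k : ℕ) - a ⟨k, hk⟩ ≤ (k + 1) - a ⟨k + 1, hm⟩ := by
          have hs : a ⟨k + 1, hm⟩ ≤ a ⟨k, hk⟩ + 1 := h1 ⟨k, hk⟩ hm
          have hb : a ⟨k, hk⟩ ≤ k := ha ⟨k, hk⟩
          omega
        exact le_trans (ih hk i hik) step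
      · have : i = ⟨k + 1, hm⟩ := Fin.ext (le_antisymm hi h)
        subst this; exact Nat.le_refl _
  have ties : ∀ m, ∀ hm : m < n, ∀ i : Fin n, (i : ℕ) < m →
      (i : ℕ) - a i = m - a ⟨m, hm⟩ → σ i < σ ⟨m, hm⟩ := by
    intro m
    induction m with
    | zero => intro hm i hi; omega
    | succ k ih =>
      intro hm i hi heq
      have hk : k < n := Nat.lt_of_succ_lt hm
      have hm' : (((⟨k, hk⟩ : Fin n) : ℕ)) + 1 < n := by simpa using hm
      have hik : (i : ℕ) ≤ k := Nat.lt_succ_iff.mp hi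
      have e1 : (i : ℕ) - a i ≤ (k : ℕ) - a ⟨k, hk⟩ := mono k hk i hik
      have e2 : (k : ℕ) - a ⟨k, hk⟩ ≤ (k + 1) - a ⟨k + 1, hm⟩ :=
        mono (k + 1) hm ⟨k, hk⟩ (Nat.le_succ k)
      have hak : a ⟨k, hk⟩ ≤ k := ha ⟨k, hk⟩
      have hak1 : a ⟨k + 1, hm⟩ ≤ k + 1 := ha ⟨k + 1, hm⟩
      have hstep : a ⟨k + 1, hm⟩ ≤ a ⟨k, hk⟩ + 1 := h1 ⟨k, hk⟩ hm'
      have htiev : a ⟨k + 1, hm⟩ = a ⟨k, hk⟩ + 1 := by omega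
      have hlt : σ ⟨k, hk⟩ < σ ⟨k + 1, hm⟩ := h2 ⟨k, hk⟩ hm' htiev
      rcases Nat.lt_or_ge (i : ℕ) k with h | h
      · exact lt_trans (ih hk i h (by omega)) hlt
      · have : i = ⟨k, hk⟩ := Fin.ext (le_antisymm hik h)
        subst this; exact hlt
  constructor
  · intro i j hij
    have := mono j.val j.isLt i (Fin.le_def.mp hij)
    simpa using this
  · intro i j hij heq
    have := ties j.val j.isLt i (Fin.lt_def.mp hij) (by simpa using heq)
    simpa using this

/-- Sorted values of a parking function satisfy `c s ≤ s`. -/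
private lemma aux_sorted_le {n : ℕ} (f : Fin n → Fin n)
    (hf : ∀ k : Fin n, (k : ℕ) + 1 ≤ (Finset.univ.filter fun i => f i ≤ k).card) :
    ∀ s : Fin n, (f (Tuple.sort f s) : ℕ) ≤ (s : ℕ) := by
  intro s
  by_contra hlt
  push_neg at hlt
  set σ := Tuple.sort f with hσ
  have hmono : Monotone (f ∘ σ) := Tuple.monotone_sort f
  -- card of the filter equals card of the filter through σ
  have hcard : (Finset.univ.filter fun i => f i ≤ s).card
      = (Finset.univ.filter fun t => f (σ t) ≤ s).card := by
    apply Finset.card_bij (fun t _ => σ.symm t)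
    · intro t ht
      simp only [mem_filter, mem_univ, true_and] at ht ⊢
      simpa using ht
    · intro t1 h1 t2 h2 h
      exact σ.symm.injective h
    · intro t ht
      refine ⟨σ t, ?_, by simp⟩
      simp only [mem_filter, mem_univ, true_and] at ht ⊢
      simpa using ht
  have hsub : (Finset.univ.filter fun t => f (σ t) ≤ s) ⊆ Finset.Iio s := by
    intro t ht
    simp only [mem_filter, mem_univ, true_and] at ht
    rw [Finset.mem_Iio]
    by_contra hts
    push_neg at hts
    have : f (σ s) ≤ f (σ t) := hmono hts
    have : (f (σ s) : ℕ) ≤ (s : ℕ) := le_trans (Fin.le_def.mp this) (Fin.le_def.mp ht)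
    omega
  have := Finset.card_le_card hsub
  rw [Fin.card_Iio] at this
  have := hf s
  omega

/-- There is a bijection between the set of parking functions of length `n`
(functions `f : Fin n → Fin n`, 0-indexed, with `#{i | f i ≤ k} ≥ k+1` for all `k`)
and the set of pairs `(σ, a)` where `σ` is a permutation of `{1,…,n}` and
`a = (a_1,…,a_n)` is a sequence of nonnegative integers (here `a : Fin n → ℕ`,
0-indexed) satisfying:
(i) `a_1 = 0`;
(ii) `a_{s+1} ≤ a_s + 1` for `s = 1,…,n-1`;
(iii) if `a_{s+1} = a_s + 1` then `σ(s) < σ(s+1)`. -/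
theorem parkingFunctions_equiv_perm_aData (n : ℕ) (hn : 0 < n) :
    Nonempty (
      {f : Fin n → Fin n //
        ∀ k : Fin n, (k : ℕ) + 1 ≤ (Finset.univ.filter fun i => f i ≤ k).card} ≃
      {p : Equiv.Perm (Fin n) × (Fin n → ℕ) //
        p.2 ⟨0, hn⟩ = 0 ∧
        (∀ s : Fin n, ∀ h : (s : ℕ) + 1 < n, p.2 ⟨(s : ℕ) + 1, h⟩ ≤ p.2 s + 1) ∧
        (∀ s : Fin n, ∀ h : (s : ℕ) + 1 < n,
          p.2 ⟨(s : ℕ) + 1, h⟩ = p.2 s + 1 → p.1 s < p.1 ⟨(s : ℕ) + 1, h⟩)}) := by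
  constructor
  refine
    { toFun := fun ⟨f, hf⟩ =>
        ⟨(Tuple.sort f, fun s => (s : ℕ) - (f (Tuple.sort f s) : ℕ)), ?_⟩
      invFun := fun ⟨⟨σ, a⟩, h0, h1, h2⟩ =>
        ⟨fun i => ⟨(σ.symm i : ℕ) - a (σ.symm i),
          lt_of_le_of_lt (Nat.sub_le _ _) (σ.symm i).isLt⟩, ?_⟩
      left_inv := ?_
      right_inv := ?_ }
  · -- toFun conditions
    set σ := Tuple.sort f with hσ
    have hmono : Monotone (f ∘ σ) := Tuple.monotone_sort f
    have hc : ∀ s : Fin n, (f (σ s) : ℕ) ≤ (s : ℕ) := aux_sorted_le f hf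
    have hties := (Tuple.eq_sort_iff.mp hσ).2
    refine ⟨?_, ?_, ?_⟩
    · have := hc ⟨0, hn⟩
      simp only at *
      omega
    · intro s h
      have e1 : (f (σ s) : ℕ) ≤ (f (σ ⟨(s : ℕ) + 1, h⟩) : ℕ) :=
        Fin.le_def.mp (hmono (by simp [Fin.le_def]))
      have := hc s
      have := hc ⟨(s : ℕ) + 1, h⟩
      simp only at *
      omega
    · intro s h heq
      have e1 : (f (σ s) : ℕ) ≤ (f (σ ⟨(s : ℕ) + 1, h⟩) : ℕ) :=
        Fin.le_def.mp (hmono (by simp [Fin.le_def]))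
      have h1 := hc s
      have h2 := hc ⟨(s : ℕ) + 1, h⟩
      simp only at *
      have : (f (σ s) : ℕ) = (f (σ ⟨(s : ℕ) + 1, h⟩) : ℕ) := by omega
      exact hties s ⟨(s : ℕ) + 1, h⟩ (by simp [Fin.lt_def]) (Fin.ext this)
  · -- invFun: parking property
    have ha : ∀ s : Fin n, a s ≤ (s : ℕ) := aux_a_le hn a h0 h1
    intro k
    have hsub : (Finset.Iic k).image σ ⊆
        Finset.univ.filter fun i =>
          (⟨(σ.symm i : ℕ) - a (σ.symm i),
            lt_of_le_of_lt (Nat.sub_le _ _) (σ.symm i).isLt⟩ : Fin n) ≤ k := by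
      intro i hi
      simp only [Finset.mem_image, Finset.mem_Iic] at hi
      obtain ⟨t, htk, rfl⟩ := hi
      simp only [mem_filter, mem_univ, true_and, Equiv.symm_apply_apply]
      rw [Fin.le_def]
      simp only
      have := ha t
      have := Fin.le_def.mp htk
      omega
    have := Finset.card_le_card hsub
    rw [Finset.card_image_of_injective _ σ.injective, Fin.card_Iic] at this
    exact this
  · -- left_inv
    rintro ⟨f, hf⟩
    apply Subtype.ext
    funext i
    set σ := Tuple.sort f with hσ
    have hc : ∀ s : Fin n, (f (σ s) : ℕ) ≤ (s : ℕ) := aux_sorted_le f hf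
    apply Fin.ext
    show (σ.symm i : ℕ) - ((σ.symm i : ℕ) - (f (σ (σ.symm i)) : ℕ)) = (f i : ℕ)
    have h1 : σ (σ.symm i) = i := σ.apply_symm_apply i
    have h2 := hc (σ.symm i)
    rw [h1] at h2 ⊢
    omega
  · -- right_inv
    rintro ⟨⟨σ, a⟩, h0, h1, h2⟩
    have ha : ∀ s : Fin n, a s ≤ (s : ℕ) := aux_a_le hn a h0 h1
    obtain ⟨hmono, hties⟩ := aux_key σ a ha h1 h2
    set f : Fin n → Fin n := fun i => ⟨(σ.symm i : ℕ) - a (σ.symm i),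
      lt_of_le_of_lt (Nat.sub_le _ _) (σ.symm i).isLt⟩ with hfdef
    have hfσ : ∀ t : Fin n, f (σ t) = ⟨(t : ℕ) - a t,
        lt_of_le_of_lt (Nat.sub_le _ _) t.isLt⟩ := by
      intro t; simp [hfdef]
    have hsort : σ = Tuple.sort f := by
      rw [Tuple.eq_sort_iff]
      constructor
      · intro i j hij
        simp only [Function.comp_apply, hfσ, Fin.mk_le_mk]
        exact hmono i j hij
      · intro i j hij heq
        rw [hfσ, hfσ] at heq
        exact hties i j hij (by simpa using congrArg Fin.val heq)
    apply Subtype.ext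
    simp only
    apply Prod.ext
    · exact hsort.symm
    · funext s
      simp only
      rw [← hsort]
      simp only [hfdef, Equiv.symm_apply_apply]
      have := ha s
      omega
end

section
/- In the associative algebra 𝔄 with generators e[i], i ∈ ℤ, and relations {e[i], e[j]} = {e[i+1], e[j-1]} for all i, j (where {a,b} = ab + ba), every product e[i_1]e[i_2]···e[i_n] with all i_s ≥ 0 can be written as a linear combination of products e[j_1]···e[j_n] with all j_s ≥ 0, j_1 = 0, and j_{s+1} ≤ j_s + 1 for all s, modulo the left ideal generated by all e[i] with i > 0 acting on a vacuum vector (i.e., in the induced module 𝔐 = ℂv ⊗_{𝔄_+} 𝔄 where v·e[i] = 0 for i > 0). -/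
/-- The defining relations of the algebra `𝔄`: for all `i j : ℤ`,
`e[i]e[j] + e[j]e[i] = e[i+1]e[j-1] + e[j-1]e[i+1]` in the free associative
`ℂ`-algebra on generators `e[i]`, `i : ℤ`. -/
inductive CatalanRel : FreeAlgebra ℂ ℤ → FreeAlgebra ℂ ℤ → Prop
  | rel (i j : ℤ) : CatalanRel
      (FreeAlgebra.ι ℂ i * FreeAlgebra.ι ℂ j + FreeAlgebra.ι ℂ j * FreeAlgebra.ι ℂ i)
      (FreeAlgebra.ι ℂ (i + 1) * FreeAlgebra.ι ℂ (j - 1) +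
        FreeAlgebra.ι ℂ (j - 1) * FreeAlgebra.ι ℂ (i + 1))

/-- The algebra `𝔄` with generators `e[i]`, `i ∈ ℤ`, and relations
`{e[i], e[j]} = {e[i+1], e[j-1]}`. -/
abbrev CatalanAlg : Type := RingQuot CatalanRel

/-- The generator `e[i]` of `𝔄`. -/
noncomputable def gen (i : ℤ) : CatalanAlg :=
  RingQuot.mkAlgHom ℂ CatalanRel (FreeAlgebra.ι ℂ i)


/-! Multiplying the relation `{e[x], e[y]} = {e[x+1], e[y-1]}` on both sides rewrites a monomial
containing an adjacent factor `e[x] e[y]` with `y ≥ x + 2` as a combination of three monomials of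
the same length, `e[x+1] e[y-1]`, `e[y-1] e[x+1]` and `e[y] e[x]` in its place. All three are
smaller in the weight `∑ₛ 2ˢ jₛ`, so iterating terminates, at monomials `e[j₁] ⋯ e[jₙ]` that
either satisfy `j_{s+1} ≤ j_s + 1` throughout or start with some `e[k]`, `k > 0`. The former are
admissible when `j₁ = 0`; the latter lie in the right ideal killed by the vacuum vector. -/

theorem gen_anticomm_nat (x y : ℕ) :
    gen x * gen ((y + 1 : ℕ) : ℤ) + gen ((y + 1 : ℕ) : ℤ) * gen x =
      gen ((x + 1 : ℕ) : ℤ) * gen y + gen y * gen ((x + 1 : ℕ) : ℤ) := by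
  have h := RingQuot.mkAlgHom_rel ℂ (CatalanRel.rel x (y + 1))
  simp only [map_add, map_mul, add_sub_cancel_right] at h
  exact_mod_cast h

noncomputable def genMonomial (l : List ℕ) : CatalanAlg := (l.map fun k : ℕ => gen k).prod

@[simp]
theorem genMonomial_cons (a : ℕ) (l : List ℕ) : genMonomial (a :: l) = gen a * genMonomial l := by
  simp [genMonomial]

@[simp]
theorem genMonomial_append (l m : List ℕ) :
    genMonomial (l ++ m) = genMonomial l * genMonomial m := by
  simp [genMonomial]

theorem genMonomial_ofFn {n : ℕ} (j : Fin n → ℕ) :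
    genMonomial (List.ofFn j) = (List.ofFn fun s => gen (j s)).prod := by
  simp only [genMonomial, List.map_ofFn]
  rfl

theorem genMonomial_straighten (p q : List ℕ) (x y : ℕ) :
    genMonomial (p ++ x :: (y + 1) :: q) =
      genMonomial (p ++ (x + 1) :: y :: q) + genMonomial (p ++ y :: (x + 1) :: q) -
        genMonomial (p ++ (y + 1) :: x :: q) := by
  rw [eq_sub_iff_add_eq]
  simpa only [genMonomial_append, genMonomial_cons, mul_add, add_mul, mul_assoc] using
    congrArg (fun z => genMonomial p * (z * genMonomial q)) (gen_anticomm_nat x y)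

def weight : List ℕ → ℕ
  | [] => 0
  | a :: l => a + 2 * weight l

theorem weight_append_lt_append (p : List ℕ) {m m' : List ℕ} (h : weight m < weight m') :
    weight (p ++ m) < weight (p ++ m') := by
  induction p with
  | nil => exact h
  | cons a p ih => simp only [List.cons_append, weight]; omega

theorem weight_append_lt_of_lt (p q : List ℕ) {u v x y : ℕ} (h : u + 2 * v < x + 2 * y) :
    weight (p ++ u :: v :: q) < weight (p ++ x :: y :: q) :=
  weight_append_lt_append p (by simp only [weight]; omega)

def IsAdmissible (l : List ℕ) : Prop :=
  l.headI = 0 ∧ l.IsChain fun a b => b ≤ a + 1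

def admissibleProducts (n : ℕ) : Set CatalanAlg :=
  {x | ∃ j : Fin n → ℕ,
    (∀ h : 0 < n, j ⟨0, h⟩ = 0) ∧
    (∀ s : Fin n, ∀ h : (s : ℕ) + 1 < n, j ⟨(s : ℕ) + 1, h⟩ ≤ j s + 1) ∧
    x = (List.ofFn fun s => gen (j s)).prod}

theorem genMonomial_mem_admissibleProducts {l : List ℕ} (hl : IsAdmissible l) :
    genMonomial l ∈ admissibleProducts l.length := by
  obtain ⟨hhead, hchain⟩ := hl
  refine ⟨l.get, fun h => ?_, fun s hs => List.isChain_iff_getElem.mp hchain s hs, ?_⟩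
  · obtain _ | ⟨a, t⟩ := l
    · simp at h
    · exact hhead
  · rw [← genMonomial_ofFn, List.ofFn_get]

def posGenMultiples : Set CatalanAlg :=
  {x | ∃ k : ℤ, 0 < k ∧ ∃ a : CatalanAlg, x = gen k * a}

def admissibleSpan (n : ℕ) : Submodule ℂ CatalanAlg :=
  Submodule.span ℂ (admissibleProducts n ∪ posGenMultiples)

theorem genMonomial_mem_admissibleSpan : (l : List ℕ) → genMonomial l ∈ admissibleSpan l.length
  | [] => Submodule.subset_span (Or.inl (genMonomial_mem_admissibleProducts ⟨rfl, .nil⟩))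
  | (a + 1) :: t => Submodule.subset_span
      (Or.inr ⟨(a + 1 : ℕ), by omega, genMonomial t, genMonomial_cons (a + 1) t⟩)
  | 0 :: t => by
    by_cases hchain : (0 :: t).IsChain fun a b => b ≤ a + 1
    · exact Submodule.subset_span (Or.inl (genMonomial_mem_admissibleProducts ⟨rfl, hchain⟩))
    obtain ⟨x, y, p, q, hsplit, hxy⟩ : ∃ x y p q, 0 :: t = p ++ x :: y :: q ∧ x + 1 < y := by
      simpa [List.isChain_iff_forall_rel_of_append_cons_cons] using hchain
    obtain ⟨y, rfl⟩ := Nat.exists_eq_add_one.mpr (by omega : 0 < y)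
    rw [hsplit, genMonomial_straighten]
    have hlen (u v : ℕ) : (p ++ u :: v :: q).length = (p ++ x :: (y + 1) :: q).length := by simp
    have h₁ := genMonomial_mem_admissibleSpan (p ++ (x + 1) :: y :: q)
    have h₂ := genMonomial_mem_admissibleSpan (p ++ y :: (x + 1) :: q)
    have h₃ := genMonomial_mem_admissibleSpan (p ++ (y + 1) :: x :: q)
    rw [hlen] at h₁ h₂ h₃
    exact sub_mem (add_mem h₁ h₂) h₃
termination_by l => weight l
decreasing_by all_goals rw [hsplit]; exact weight_append_lt_of_lt p q (by omega)

/-- In the algebra `𝔄` with relations `{e[i], e[j]} = {e[i+1], e[j-1]}`, every product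
`e[i_1]⋯e[i_n]` with all `i_s ≥ 0` is, modulo the right ideal generated by the `e[i]`
with `i > 0` (whose image acts as zero on the vacuum vector of the induced module
`𝔐 = ℂv ⊗_{𝔄_+} 𝔄`), a linear combination of products `e[j_1]⋯e[j_n]` with all
`j_s ≥ 0`, `j_1 = 0`, and `j_{s+1} ≤ j_s + 1` for all `s`. -/
theorem admissible_monomials_span (n : ℕ) (i : Fin n → ℕ) :
    (List.ofFn fun s => gen (i s)).prod ∈
      Submodule.span ℂ
        ({x : CatalanAlg | ∃ j : Fin n → ℕ,
            (∀ h : 0 < n, j ⟨0, h⟩ = 0) ∧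
            (∀ s : Fin n, ∀ h : (s : ℕ) + 1 < n, j ⟨(s : ℕ) + 1, h⟩ ≤ j s + 1) ∧
            x = (List.ofFn fun s => gen (j s)).prod} ∪
         {x : CatalanAlg | ∃ k : ℤ, 0 < k ∧ ∃ a : CatalanAlg, x = gen k * a}) := by
  have h := genMonomial_mem_admissibleSpan (List.ofFn i)
  rw [List.length_ofFn, genMonomial_ofFn] at h
  exact h
end

section
/- The number of orbits of the symmetric group S_n acting on the set of parking functions of length n (by permuting the arguments) equals the nth Catalan number (1/(n+1)) * binomial(2n, n). -/
open Finset

/-! ### Staircase functions: monotone `f : Fin m → Fin m` with `f i ≤ i`. -/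

def Staircase (m : ℕ) : Type := {f : Fin m → Fin m // Monotone f ∧ ∀ i, f i ≤ i}

instance stairDecPred (m : ℕ) :
    DecidablePred (fun f : Fin m → Fin m => Monotone f ∧ ∀ i, f i ≤ i) := fun f =>
  inferInstanceAs (Decidable ((∀ a b : Fin m, a ≤ b → f a ≤ f b) ∧ ∀ i, f i ≤ i))

instance instFintypeStaircase (m : ℕ) : Fintype (Staircase m) := by
  unfold Staircase; exact Subtype.fintype _

/-- Extend a function `Fin m → Fin m` to `ℕ → ℕ` by `0`. -/
def extFun {m : ℕ} (g : Fin m → Fin m) (x : ℕ) : ℕ :=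
  if hx : x < m then (g ⟨x, hx⟩ : ℕ) else 0

lemma extFun_lt {m : ℕ} (g : Fin m → Fin m) {x : ℕ} (hx : x < m) : extFun g x < m := by
  rw [extFun, dif_pos hx]; exact (g ⟨x, hx⟩).isLt

lemma extFun_le {m : ℕ} {g : Fin m → Fin m} (hg : ∀ i, g i ≤ i) {x : ℕ} (hx : x < m) :
    extFun g x ≤ x := by
  rw [extFun, dif_pos hx]; exact Fin.le_def.mp (hg ⟨x, hx⟩)

lemma extFun_mono {m : ℕ} {g : Fin m → Fin m} (hg : Monotone g) {x y : ℕ} (hxy : x ≤ y)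
    (hy : y < m) : extFun g x ≤ extFun g y := by
  rw [extFun, extFun, dif_pos hy, dif_pos (lt_of_le_of_lt hxy hy)]
  exact Fin.le_def.mp (hg (Fin.mk_le_mk.mpr hxy))

lemma extFun_spec {m : ℕ} (g : Fin m → Fin m) {x : ℕ} (hx : x < m) :
    extFun g x = (g ⟨x, hx⟩ : ℕ) := by rw [extFun, dif_pos hx]

lemma extFun_self {m : ℕ} (g : Fin m → Fin m) (t : Fin m) : extFun g (t : ℕ) = (g t : ℕ) := by
  rw [extFun_spec g t.isLt, Fin.eta]

/-- Convenient constructor for staircase functions from value-level data. -/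
def mkStair {m : ℕ} (f : Fin m → ℕ) (hb : ∀ j, f j < m)
    (hm : ∀ j k : Fin m, (j : ℕ) ≤ (k : ℕ) → f j ≤ f k) (hs : ∀ j, f j ≤ (j : ℕ)) :
    Staircase m :=
  ⟨fun j => ⟨f j, hb j⟩,
   fun a b hab => Fin.mk_le_mk.mpr (hm a b (Fin.le_def.mp hab)),
   fun j => Fin.le_def.mpr (hs j)⟩

/-! ### The first-return decomposition -/

/-- The value of the function glued from `g` (shifted by one) and `h` (shifted by `i+1`). -/
def bval {n : ℕ} (i : ℕ) (g : Fin i → Fin i) (h : Fin (n - i) → Fin (n - i)) (x : ℕ) : ℕ :=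
  if x = 0 then 0 else if x < i + 1 then extFun g (x - 1) else i + 1 + extFun h (x - (i + 1))

/-- Glue `g` and `h` into a staircase function of size `n+1`. -/
def buildS {n : ℕ} (i : Fin (n + 1)) (g : Staircase (i : ℕ)) (h : Staircase (n - (i : ℕ))) :
    Staircase (n + 1) := by
  have hi := i.isLt
  refine mkStair (fun t => bval (n := n) (i : ℕ) g.1 h.1 (t : ℕ)) (fun t => ?_)
    (fun t s hts => ?_) (fun t => ?_)
  · have ht := t.isLt
    show bval (n := n) (i : ℕ) g.1 h.1 (t : ℕ) < n + 1
    rw [bval]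
    split_ifs with h1 h2
    · omega
    · have := extFun_lt g.1 (show (t : ℕ) - 1 < (i : ℕ) by omega); omega
    · have := extFun_lt h.1 (show (t : ℕ) - ((i : ℕ) + 1) < n - (i : ℕ) by omega); omega
  · have ht := t.isLt
    have hsl := s.isLt
    show bval (n := n) (i : ℕ) g.1 h.1 (t : ℕ) ≤ bval (n := n) (i : ℕ) g.1 h.1 (s : ℕ)
    rw [bval, bval]
    split_ifs with h1 h2 h3 h4 h5 h6
    · omega
    · omega
    · omega
    · omega
    · exact extFun_mono g.2.1 (by omega) (by omega)
    · have := extFun_lt g.1 (show (t : ℕ) - 1 < (i : ℕ) by omega); omega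
    · omega
    · omega
    · exact Nat.add_le_add_left (extFun_mono h.2.1 (by omega) (by omega)) _
  · have ht := t.isLt
    show bval (n := n) (i : ℕ) g.1 h.1 (t : ℕ) ≤ (t : ℕ)
    rw [bval]
    split_ifs with h1 h2
    · omega
    · have := extFun_le g.2.2 (show (t : ℕ) - 1 < (i : ℕ) by omega); omega
    · have := extFun_le h.2.2 (show (t : ℕ) - ((i : ℕ) + 1) < n - (i : ℕ) by omega); omega

lemma buildS_val {n : ℕ} (i : Fin (n + 1)) (g : Staircase (i : ℕ)) (h : Staircase (n - (i : ℕ)))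
    (t : Fin (n + 1)) : ((buildS i g h).1 t : ℕ) = bval (n := n) (i : ℕ) g.1 h.1 (t : ℕ) := rfl

lemma bval_self {n : ℕ} (i : Fin (n + 1)) (g : Staircase (i : ℕ)) (h : Staircase (n - (i : ℕ)))
    (hi : (i : ℕ) < n) : bval (n := n) (i : ℕ) g.1 h.1 ((i : ℕ) + 1) = (i : ℕ) + 1 := by
  rw [bval, if_neg (by omega), if_neg (by omega)]
  have := extFun_le h.2.2 (show (i : ℕ) + 1 - ((i : ℕ) + 1) < n - (i : ℕ) by omega)
  omega

lemma bval_lt {n : ℕ} (i : Fin (n + 1)) (g : Staircase (i : ℕ)) (h : Staircase (n - (i : ℕ)))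
    {t : ℕ} (h1 : 0 < t) (h2 : t ≤ (i : ℕ)) : bval (n := n) (i : ℕ) g.1 h.1 t < t := by
  rw [bval, if_neg (by omega), if_pos (by omega)]
  have := extFun_le g.2.2 (show t - 1 < (i : ℕ) by omega)
  omega

lemma bval_g {n : ℕ} (i : Fin (n + 1)) (g : Staircase (i : ℕ)) (h : Staircase (n - (i : ℕ)))
    (j : Fin (i : ℕ)) : bval (n := n) (i : ℕ) g.1 h.1 ((j : ℕ) + 1) = (g.1 j : ℕ) := by
  have hj := j.isLt
  rw [bval, if_neg (by omega), if_pos (by omega)]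
  rw [show (j : ℕ) + 1 - 1 = (j : ℕ) by omega, extFun_self]

lemma bval_h {n : ℕ} (i : Fin (n + 1)) (g : Staircase (i : ℕ)) (h : Staircase (n - (i : ℕ)))
    (j : Fin (n - (i : ℕ))) :
    bval (n := n) (i : ℕ) g.1 h.1 ((i : ℕ) + 1 + (j : ℕ)) = (i : ℕ) + 1 + (h.1 j : ℕ) := by
  have hj := j.isLt
  rw [bval, if_neg (by omega), if_neg (by omega)]
  rw [show (i : ℕ) + 1 + (j : ℕ) - ((i : ℕ) + 1) = (j : ℕ) by omega, extFun_self]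

/-- The packaged gluing map out of the sigma type. -/
def buildSig {n : ℕ} (x : Σ i : Fin (n + 1), Staircase (i : ℕ) × Staircase (n - (i : ℕ))) :
    Staircase (n + 1) := buildS x.1 x.2.1 x.2.2

lemma buildSig_injective (n : ℕ) : Function.Injective (buildSig (n := n)) := by
  rintro ⟨i, g, h⟩ ⟨i', g', h'⟩ heq
  have hv : ∀ t : ℕ, (ht : t < n + 1) →
      bval (n := n) (i : ℕ) g.1 h.1 t = bval (n := n) (i' : ℕ) g'.1 h'.1 t := by
    intro t ht
    have := congrArg Fin.val (congrFun (congrArg Subtype.val heq) ⟨t, ht⟩)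
    exact this
  have hii : (i : ℕ) = (i' : ℕ) := by
    rcases Nat.lt_trichotomy (i : ℕ) (i' : ℕ) with hlt | heq' | hgt
    · exfalso
      have hi' := i'.isLt
      have h1 := hv ((i : ℕ) + 1) (by omega)
      rw [bval_self i g h (by omega)] at h1
      have h2 := bval_lt i' g' h' (t := (i : ℕ) + 1) (by omega) (by omega)
      omega
    · exact heq'
    · exfalso
      have hi := i.isLt
      have h1 := hv ((i' : ℕ) + 1) (by omega)
      rw [bval_self i' g' h' (by omega)] at h1
      have h2 := bval_lt i g h (t := (i' : ℕ) + 1) (by omega) (by omega)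
      omega
  obtain rfl : i = i' := Fin.ext hii
  have hg : g = g' := by
    apply Subtype.ext; funext j
    apply Fin.ext
    have hj := j.isLt
    have hi := i.isLt
    have h1 := hv ((j : ℕ) + 1) (by omega)
    rwa [bval_g i g h j, bval_g i g' h' j] at h1
  have hh : h = h' := by
    apply Subtype.ext; funext j
    apply Fin.ext
    have hj := j.isLt
    have hi := i.isLt
    have h1 := hv ((i : ℕ) + 1 + (j : ℕ)) (by omega)
    rw [bval_h i g h j, bval_h i g' h' j] at h1
    omega
  rw [hg, hh]

/-! ### The splitting map -/

lemma fret_exists {n : ℕ} (F : Staircase (n + 1)) :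
    ∃ t, 0 < t ∧ ∀ j : Fin (n + 1), (j : ℕ) = t → (F.1 j : ℕ) = t :=
  ⟨n + 1, n.succ_pos, fun j hj => absurd hj (by have := j.isLt; omega)⟩

/-- The first positive "return to the diagonal" of a staircase function (or `n+1`). -/
def fret {n : ℕ} (F : Staircase (n + 1)) : ℕ := Nat.find (fret_exists F)

lemma fret_pos {n : ℕ} (F : Staircase (n + 1)) : 0 < fret F := (Nat.find_spec (fret_exists F)).1

lemma fret_le {n : ℕ} (F : Staircase (n + 1)) : fret F ≤ n + 1 :=
  Nat.find_le ⟨n.succ_pos, fun j hj => absurd hj (by have := j.isLt; omega)⟩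

lemma fret_fix {n : ℕ} (F : Staircase (n + 1)) (hm : fret F < n + 1) :
    extFun F.1 (fret F) = fret F := by
  rw [extFun_spec F.1 hm]
  exact (Nat.find_spec (fret_exists F)).2 ⟨fret F, hm⟩ rfl

lemma fret_below {n : ℕ} (F : Staircase (n + 1)) {t : ℕ} (h1 : 0 < t) (h2 : t < fret F)
    (ht : t < n + 1) : extFun F.1 t < t := by
  have h3 := Nat.find_min (fret_exists F) h2
  push_neg at h3
  obtain ⟨j, hj1, hj2⟩ := h3 h1
  obtain rfl : j = ⟨t, ht⟩ := Fin.ext hj1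
  have h4 := Fin.le_def.mp (F.2.2 ⟨t, ht⟩)
  rw [extFun_spec F.1 ht]
  simp only [Fin.val_mk] at h4 hj2
  omega

/-- Split a staircase function at its first return to the diagonal. -/
def splitS {n : ℕ} (F : Staircase (n + 1)) :
    Σ i : Fin (n + 1), Staircase (i : ℕ) × Staircase (n - (i : ℕ)) := by
  have h1 := fret_pos F
  have h2 := fret_le F
  refine ⟨⟨fret F - 1, by omega⟩, ?_, ?_⟩
  · show Staircase (fret F - 1)
    refine mkStair (fun j => extFun F.1 ((j : ℕ) + 1)) (fun j => ?_) (fun j k hjk => ?_)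
      (fun j => ?_)
    · have hj : (j : ℕ) < fret F - 1 := j.isLt
      show extFun F.1 ((j : ℕ) + 1) < fret F - 1
      have := fret_below F (t := (j : ℕ) + 1) (by omega) (by omega) (by omega)
      omega
    · have hj : (j : ℕ) < fret F - 1 := j.isLt
      have hk : (k : ℕ) < fret F - 1 := k.isLt
      show extFun F.1 ((j : ℕ) + 1) ≤ extFun F.1 ((k : ℕ) + 1)
      exact extFun_mono F.2.1 (by omega) (by omega)
    · have hj : (j : ℕ) < fret F - 1 := j.isLt
      show extFun F.1 ((j : ℕ) + 1) ≤ (j : ℕ)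
      have := fret_below F (t := (j : ℕ) + 1) (by omega) (by omega) (by omega)
      omega
  · show Staircase (n - (fret F - 1))
    refine mkStair (fun j => extFun F.1 (fret F + (j : ℕ)) - fret F) (fun j => ?_)
      (fun j k hjk => ?_) (fun j => ?_)
    · have hj : (j : ℕ) < n - (fret F - 1) := j.isLt
      show extFun F.1 (fret F + (j : ℕ)) - fret F < n - (fret F - 1)
      have := extFun_le F.2.2 (show fret F + (j : ℕ) < n + 1 by omega)
      omega
    · have hj : (j : ℕ) < n - (fret F - 1) := j.isLt
      have hk : (k : ℕ) < n - (fret F - 1) := k.isLt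
      show extFun F.1 (fret F + (j : ℕ)) - fret F ≤ extFun F.1 (fret F + (k : ℕ)) - fret F
      have := extFun_mono F.2.1 (show fret F + (j : ℕ) ≤ fret F + (k : ℕ) by omega)
        (show fret F + (k : ℕ) < n + 1 by omega)
      omega
    · have hj : (j : ℕ) < n - (fret F - 1) := j.isLt
      show extFun F.1 (fret F + (j : ℕ)) - fret F ≤ (j : ℕ)
      have := extFun_le F.2.2 (show fret F + (j : ℕ) < n + 1 by omega)
      omega

lemma splitS_fst {n : ℕ} (F : Staircase (n + 1)) : ((splitS F).1 : ℕ) = fret F - 1 := rfl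

lemma splitS_g_val {n : ℕ} (F : Staircase (n + 1)) (j : Fin ((splitS F).1 : ℕ)) :
    ((splitS F).2.1.1 j : ℕ) = extFun F.1 ((j : ℕ) + 1) := rfl

lemma splitS_h_val {n : ℕ} (F : Staircase (n + 1)) (j : Fin (n - ((splitS F).1 : ℕ))) :
    ((splitS F).2.2.1 j : ℕ) = extFun F.1 (fret F + (j : ℕ)) - fret F := rfl

lemma buildSig_splitS {n : ℕ} (F : Staircase (n + 1)) : buildSig (splitS F) = F := by
  have h1 := fret_pos F
  have h2 := fret_le F
  have hfst := splitS_fst F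
  apply Subtype.ext; funext t; apply Fin.ext
  have ht := t.isLt
  rw [buildSig, buildS_val, ← extFun_self F.1 t]
  rw [bval]
  split_ifs with hc1 hc2
  · have := extFun_le F.2.2 (show (t : ℕ) < n + 1 from ht)
    omega
  · -- 0 < t < fret F
    rw [extFun_spec _ (show (t : ℕ) - 1 < ((splitS F).1 : ℕ) by omega), splitS_g_val]
    simp only [Fin.val_mk]
    rw [show (t : ℕ) - 1 + 1 = (t : ℕ) by omega]
  · -- fret F ≤ t
    rw [extFun_spec _ (show (t : ℕ) - (((splitS F).1 : ℕ) + 1) < n - ((splitS F).1 : ℕ)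
        by omega), splitS_h_val]
    simp only [Fin.val_mk]
    rw [show fret F + ((t : ℕ) - (((splitS F).1 : ℕ) + 1)) = (t : ℕ) by omega]
    have hfix := fret_fix F (by omega)
    have hmono := extFun_mono F.2.1 (show fret F ≤ (t : ℕ) by omega) ht
    omega

lemma splitS_injective (n : ℕ) : Function.Injective (splitS (n := n)) :=
  Function.LeftInverse.injective buildSig_splitS

/-! ### Counting staircase functions -/

theorem card_staircase (n : ℕ) : Fintype.card (Staircase n) = catalan n := by
  induction n using Nat.strong_induction_on with
  | _ n ih =>
    obtain _ | m := n
    · rw [catalan_zero, Fintype.card_eq_one_iff]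
      refine ⟨⟨fun j => j.elim0, fun a => a.elim0, fun i => i.elim0⟩, fun F => ?_⟩
      exact Subtype.ext (funext fun j => j.elim0)
    · have e1 : Fintype.card (Σ i : Fin (m + 1), Staircase (i : ℕ) × Staircase (m - (i : ℕ)))
          = Fintype.card (Staircase (m + 1)) :=
        le_antisymm (Fintype.card_le_of_injective _ (buildSig_injective m))
          (Fintype.card_le_of_injective _ (splitS_injective m))
      rw [← e1, Fintype.card_sigma]
      simp only [Fintype.card_prod]
      rw [catalan_succ]
      refine Finset.sum_congr rfl fun i _ => ?_
      rw [ih (i : ℕ) (by have := i.isLt; omega), ih (m - (i : ℕ)) (by omega)]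

/-! ### From parking functions to staircase functions -/

lemma filter_card_comp {n : ℕ} (f : Fin n → Fin n) (σ : Equiv.Perm (Fin n)) (k : Fin n) :
    (Finset.univ.filter fun i => f (σ i) ≤ k).card
      = (Finset.univ.filter fun i => f i ≤ k).card := by
  apply Finset.card_bij (fun a _ => σ a)
  · intro a ha
    simp only [Finset.mem_filter, Finset.mem_univ, true_and] at ha ⊢
    exact ha
  · intro a _ b _ hab
    exact σ.injective hab
  · intro b hb
    refine ⟨σ.symm b, ?_, by simp⟩
    simp only [Finset.mem_filter, Finset.mem_univ, true_and] at hb ⊢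
    simpa using hb

lemma staircase_of_monotone_parking {n : ℕ} {g : Fin n → Fin n} (hm : Monotone g)
    (hp : ∀ k : Fin n, (k : ℕ) + 1 ≤ (Finset.univ.filter fun i => g i ≤ k).card) :
    ∀ i, g i ≤ i := by
  intro i
  by_contra hlt
  push_neg at hlt
  have hsub : (Finset.univ.filter fun j => g j ≤ i) ⊆ Finset.Iio i := by
    intro j hj
    simp only [Finset.mem_filter, Finset.mem_univ, true_and] at hj
    rw [Finset.mem_Iio]
    by_contra hji
    push_neg at hji
    exact absurd (le_trans (hm hji) hj) (not_le.mpr hlt)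
  have hcard := Finset.card_le_card hsub
  rw [Fin.card_Iio] at hcard
  have := hp i
  omega

lemma parking_of_staircase {n : ℕ} {g : Fin n → Fin n} (hs : ∀ i, g i ≤ i) :
    ∀ k : Fin n, (k : ℕ) + 1 ≤ (Finset.univ.filter fun i => g i ≤ k).card := by
  intro k
  have hsub : Finset.Iic k ⊆ Finset.univ.filter fun i => g i ≤ k := by
    intro j hj
    rw [Finset.mem_Iic] at hj
    simp only [Finset.mem_filter, Finset.mem_univ, true_and]
    exact le_trans (hs j) hj
  have := Finset.card_le_card hsub
  rwa [Fin.card_Iic] at this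

/-! ### The main theorem -/

/-- The number of orbits of the symmetric group `S_n` acting (by permutation of the
arguments) on the set of parking functions of length `n` equals the `n`-th Catalan
number `(1/(n+1)) * binomial(2n, n)` (stated multiplicatively to stay in `ℕ`).
Two parking functions are identified iff they differ by a permutation of arguments. -/
theorem card_parkingFunction_orbits (n : ℕ) :
    Nat.card (Quot (fun f g :
        {f : Fin n → Fin n //
          ∀ k : Fin n, (k : ℕ) + 1 ≤ (Finset.univ.filter fun i => f i ≤ k).card} =>
        ∃ σ : Equiv.Perm (Fin n), ∀ i, f.1 i = g.1 (σ i))) * (n + 1) =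
    Nat.choose (2 * n) n := by
  set r := fun f g :
      {f : Fin n → Fin n //
        ∀ k : Fin n, (k : ℕ) + 1 ≤ (Finset.univ.filter fun i => f i ≤ k).card} =>
      ∃ σ : Equiv.Perm (Fin n), ∀ i, f.1 i = g.1 (σ i) with hr
  have key : Nat.card (Quot r) = catalan n := by
    have e : Quot r ≃ Staircase n := by
      refine Equiv.ofBijective (Quot.lift (fun F => (⟨F.1 ∘ Tuple.sort F.1,
        Tuple.monotone_sort F.1, ?_⟩ : Staircase n)) ?_) ?_
      · -- staircase property of the sorted function
        refine staircase_of_monotone_parking (Tuple.monotone_sort F.1) fun k => ?_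
        have hk := F.2 k
        have : (Finset.univ.filter fun i => (F.1 ∘ Tuple.sort F.1) i ≤ k).card
            = (Finset.univ.filter fun i => F.1 i ≤ k).card :=
          filter_card_comp F.1 (Tuple.sort F.1) k
        omega
      · -- respects the relation
        rintro F G ⟨σ, hσ⟩
        have hFG : F.1 = G.1 ∘ σ := funext hσ
        apply Subtype.ext
        show F.1 ∘ Tuple.sort F.1 = G.1 ∘ Tuple.sort G.1
        rw [hFG]
        exact Tuple.comp_perm_comp_sort_eq_comp_sort
      · constructor
        · -- injective
          intro a b
          induction a using Quot.ind with
          | _ F =>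
            induction b using Quot.ind with
            | _ G =>
              intro hab
              have hval : F.1 ∘ Tuple.sort F.1 = G.1 ∘ Tuple.sort G.1 :=
                congrArg Subtype.val hab
              apply Quot.sound
              refine ⟨(Tuple.sort F.1).symm.trans (Tuple.sort G.1), fun i => ?_⟩
              have h1 : F.1 (Tuple.sort F.1 ((Tuple.sort F.1).symm i))
                  = G.1 (Tuple.sort G.1 ((Tuple.sort F.1).symm i)) :=
                congrFun hval ((Tuple.sort F.1).symm i)
              simp only [Equiv.apply_symm_apply] at h1
              simpa [Equiv.trans_apply] using h1
        · -- surjective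
          intro G
          refine ⟨Quot.mk r ⟨G.1, parking_of_staircase G.2.2⟩, ?_⟩
          apply Subtype.ext
          show G.1 ∘ Tuple.sort G.1 = G.1
          rw [Tuple.sort_eq_refl_iff_monotone.mpr G.2.1]
          rfl
    rw [Nat.card_congr e, Nat.card_eq_fintype_card, card_staircase]
  rw [key, mul_comm, succ_mul_catalan_eq_centralBinom,
    Nat.centralBinom_eq_two_mul_choose]
end
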